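/- Let A, B and C be abelian categories. Let F : A ⥤ B be an exact functor, let G : B ⥤ A be a right adjoint of F, and let H : A ⥤ C be an effaceable additive functor. Then the composite functor G ⋙ H : B ⥤ C is also effaceable; that is, for every object X of B there exists a monomorphism v : X ⟶ X' in B such that H.map (G.map v) = 0. -/
import Mathlib


open CategoryTheory CategoryTheory.Limits

universe v₁ v₂ v₃ u₁ u₂ u₃

/-- An additive functor `H : A ⥤ C` is *effaceable* if every object `M` of `A` admits a
monomorphism `u : M ⟶ N` such that `H.map u = 0`. -/
def Effaceable {A : Type u₁} {C : Type u₃} [Category.{v₁} A] [Category.{v₃} C]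
    [HasZeroMorphisms C] (H : A ⥤ C) : Prop :=
  ∀ M : A, ∃ (N : A) (u : M ⟶ N), Mono u ∧ H.map u = 0

/-- Let `F : A ⥤ B` be an exact functor between abelian categories with right adjoint
`G : B ⥤ A`, and let `H : A ⥤ C` be an effaceable additive functor. Then `G ⋙ H` is
effaceable: for every `X : B` there is a monomorphism `v : X ⟶ X'` with
`H.map (G.map v) = 0`. -/
theorem effaceable_comp_of_right_adjoint
    {A : Type u₁} {B : Type u₂} {C : Type u₃}
    [Category.{v₁} A] [Category.{v₂} B] [Category.{v₃} C]
    [Abelian A] [Abelian B] [Abelian C]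
    (F : A ⥤ B) [PreservesFiniteLimits F] [PreservesFiniteColimits F]
    (G : B ⥤ A) (adj : F ⊣ G)
    (H : A ⥤ C) [H.Additive] (hH : Effaceable H) :
    Effaceable (G ⋙ H) := by
  intro X
  obtain ⟨N, u, hu, hHu⟩ := hH (G.obj X)
  haveI : Mono (F.map u) := F.map_mono u
  refine ⟨pushout (F.map u) (adj.counit.app X), pushout.inr _ _, inferInstance, ?_⟩
  have hfac : G.map (pushout.inr (F.map u) (adj.counit.app X)) =
      u ≫ (adj.unit.app N ≫ G.map (pushout.inl (F.map u) (adj.counit.app X))) := by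
    rw [← Category.assoc, ← adj.unit_naturality u, Category.assoc, ← G.map_comp,
      pushout.condition, G.map_comp, ← Category.assoc, adj.right_triangle_components,
      Category.id_comp]
  simp only [Functor.comp_map, hfac, H.map_comp, hHu, zero_comp]
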